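/- Let B denote the set of bounded real sequences, regarded as a topological vector space with the subspace topology inherited from the product space ℝ^ℕ (the topology of pointwise convergence), and let m ∈ ℕ, m ≥ 1. Then B is a σ-Peano space, and CS_∞(ℝ^m, B) is 𝔠-lineable in C(ℝ^m, B): there exists a linearly independent family of cardinality 𝔠 (the continuum) in the real vector space C(ℝ^m, B) such that every nonzero finite linear combination of its members belongs to CS_∞(ℝ^m, B). -/

import Mathlib

/-- The space of bounded real sequences, as a submodule of `ℝ^ℕ`.  As a topological
space it carries the subspace topology inherited from the product topology on
`ℕ → ℝ` (the topology of pointwise convergence), not the sup-norm topology. -/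
def boundedSeq : Submodule ℝ (ℕ → ℝ) where
  carrier := {x | ∃ C : ℝ, ∀ n, |x n| ≤ C}
  add_mem' := by
    rintro x y ⟨C, hC⟩ ⟨D, hD⟩
    exact ⟨C + D, fun n => (abs_add_le _ _).trans (add_le_add (hC n) (hD n))⟩
  zero_mem' := ⟨0, fun n => by simp⟩
  smul_mem' := by
    rintro c x ⟨C, hC⟩
    refine ⟨|c| * C, fun n => ?_⟩
    rw [Pi.smul_apply, smul_eq_mul, abs_mul]
    exact mul_le_mul_of_nonneg_left (hC n) (abs_nonneg c)

/-- A Peano space: a nonempty compact, connected, locally connected, metrizable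
topological space. -/
def IsPeanoSpace (X : Type*) [TopologicalSpace X] : Prop :=
  Nonempty X ∧ CompactSpace X ∧ ConnectedSpace X ∧ LocallyConnectedSpace X ∧
    TopologicalSpace.MetrizableSpace X

/-- A σ-Peano space: an increasing sequence of subsets, each a Peano space with the
subspace topology, whose union is the whole space. -/
def IsSigmaPeano (X : Type*) [TopologicalSpace X] : Prop :=
  ∃ K : ℕ → Set X, Monotone K ∧ (∀ n, IsPeanoSpace (K n)) ∧ (⋃ n, K n) = Set.univ

/-- `CSInf m X f` means `f : ℝ^m → X` is continuous and each fiber `f⁻¹({a})` is an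
unbounded subset of `ℝ^m`; in particular such an `f` is surjective. -/
def CSInf (m : ℕ) (X : Type*) [TopologicalSpace X]
    (f : EuclideanSpace ℝ (Fin m) → X) : Prop :=
  Continuous f ∧ ∀ a : X, ¬ Bornology.IsBounded (f ⁻¹' {a})

/-!
Each `Kₙ = {x | ∀ i, |xᵢ| ≤ n}` is a compact convex subset of the locally convex metrizable
space `B`, hence a Peano space, and these exhaust `B`.

For lineability, extend the Cantor-set surjection onto the Hilbert cube (Tietze) to a curve
`γ : [0,1] → [0,1]^ℕ` and sweep it with growing amplitude: `Φ (2k + s) = k (2γ(s) - 1)` is a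
continuous curve `ℝ → B` through every point of `B` at arbitrarily large times; splitting off
the first coordinate gives `Ψ = (ρ, f) : ℝ → ℝ × B` with the same property. Fix a functional `ℓ`
and `v` with `ℓ v = 1`, and put `F s x = exp (s ρ(ℓ x)) • f(ℓ x)`. A nonzero combination
`∑ cₛ F s` is `x ↦ h(ρ(ℓ x)) • f(ℓ x)` with `h r = ∑ cₛ exp (s r)`, and `h ≠ 0` because the
exponentials are distinct characters of `(ℝ, +)`. Choosing `r` with `h r ≠ 0` and large `t` with
`Ψ t = (r, (h r)⁻¹ • a)`, the point `t • v`, of arbitrarily large norm, lies over `a`.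
-/

open Real Set Filter Topology

theorem Convex.isPeanoSpace {E : Type*} [AddCommGroup E] [Module ℝ E] [TopologicalSpace E]
    [IsTopologicalAddGroup E] [ContinuousSMul ℝ E] [LocallyConvexSpace ℝ E]
    [TopologicalSpace.MetrizableSpace E] {S : Set E} (hS : Convex ℝ S) (hSc : IsCompact S)
    (hSne : S.Nonempty) : IsPeanoSpace S :=
  have := hS.locallyPathConnectedSpace
  ⟨hSne.to_subtype, isCompact_iff_compactSpace.mp hSc,
    isConnected_iff_connectedSpace.mp (hS.isConnected hSne), inferInstance, inferInstance⟩

instance : TopologicalSpace.MetrizableSpace boundedSeq :=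
  Topology.IsEmbedding.subtypeVal.metrizableSpace

instance : Nontrivial boundedSeq :=
  ⟨⟨0, ⟨fun _ => 1, 1, fun _ => by simp⟩, fun h => by simpa using congr_fun congr($h.1) 0⟩⟩

theorem isSigmaPeano_boundedSeq : IsSigmaPeano boundedSeq := by
  let K (n : ℕ) : Set boundedSeq := {x | ∀ i, |(x : ℕ → ℝ) i| ≤ n}
  refine ⟨K, fun a b hab x hx i => (hx i).trans (Nat.cast_le.mpr hab), fun n => ?_, ?_⟩
  · have hK : K n = Subtype.val ⁻¹' pi univ fun _ => Icc (-n : ℝ) n := by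
      ext x
      simp only [K, mem_ofPred_eq, mem_preimage, mem_univ_pi, mem_Icc, abs_le]
    refine Convex.isPeanoSpace ?_ ?_ ⟨0, fun i => by simp⟩
    · rw [hK]
      exact (convex_pi fun _ _ => convex_Icc _ _).linear_preimage boundedSeq.subtype
    · rw [hK]
      refine Topology.IsInducing.subtypeVal.isCompact_preimage'
        (isCompact_univ_pi fun _ => isCompact_Icc) fun x hx => ?_
      exact ⟨⟨x, n, fun i => abs_le.mpr (hx i trivial)⟩, rfl⟩
  · refine eq_univ_of_forall fun x => ?_
    obtain ⟨C, hC⟩ := x.2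
    obtain ⟨n, hn⟩ := exists_nat_ge C
    exact mem_iUnion.2 ⟨n, fun i => (hC i).trans hn⟩

theorem exists_continuousMap_surjOn_Icc_hilbertCube :
    ∃ γ : C(ℝ, ℕ → unitInterval), SurjOn γ (Icc 0 1) univ := by
  let φ : C(cantorSet, ℕ → unitInterval) :=
    ⟨cantorToHilbert ∘ cantorSetHomeomorphNatToBool,
      cantorToHilbert_continuous.comp cantorSetHomeomorphNatToBool.continuous⟩
  obtain ⟨γ, hγ⟩ := ContinuousMap.exists_restrict_eq isClosed_cantorSet φ
  refine ⟨γ, fun y _ => ?_⟩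
  obtain ⟨t, rfl⟩ := (cantorToHilbert_surjective.comp cantorSetHomeomorphNatToBool.surjective) y
  exact ⟨t, cantorSet_subset_unitInterval t.2, DFunLike.congr_fun hγ t⟩

noncomputable def triangleWave (t : ℝ) : ℝ := arccos (cos (π * t)) / π

@[fun_prop]
theorem continuous_triangleWave : Continuous triangleWave := by
  unfold triangleWave; fun_prop

theorem triangleWave_two_mul_add (k : ℤ) {s : ℝ} (hs : s ∈ Icc 0 1) :
    triangleWave (2 * k + s) = s := by
  have hπs : π * (2 * k + s) = π * s + k * (2 * π) := by ring
  rw [triangleWave, hπs, cos_add_int_mul_two_pi, arccos_cos (by nlinarith [pi_pos, hs.1])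
    (by nlinarith [pi_pos, hs.2]), mul_div_cancel_left₀ _ pi_ne_zero]

theorem unitInterval.abs_two_mul_sub_one_le (x : unitInterval) : |2 * (x : ℝ) - 1| ≤ 1 := by
  rw [abs_le]; constructor <;> linarith [x.2.1, x.2.2]

noncomputable def sweep (γ : C(ℝ, ℕ → unitInterval)) : C(ℝ, boundedSeq) where
  toFun t := ⟨fun n => (t - triangleWave t) / 2 * (2 * γ (triangleWave t) n - 1),
    |(t - triangleWave t) / 2|, fun n => by
      rw [abs_mul]
      exact mul_le_of_le_one_right (abs_nonneg _) (unitInterval.abs_two_mul_sub_one_le _)⟩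
  continuous_toFun := by
    refine Continuous.subtype_mk (continuous_pi fun n => ?_) _
    fun_prop

theorem sweep_two_mul_add (γ : C(ℝ, ℕ → unitInterval)) (k : ℕ) {s : ℝ} (hs : s ∈ Icc 0 1)
    (n : ℕ) : (sweep γ (2 * k + s) : ℕ → ℝ) n = k * (2 * γ s n - 1) := by
  have hwave := triangleWave_two_mul_add k hs
  push_cast at hwave
  simp only [sweep, ContinuousMap.coe_mk, hwave]
  ring

theorem frequently_sweep_eq {γ : C(ℝ, ℕ → unitInterval)} (hγ : SurjOn γ (Icc 0 1) univ)
    (y : boundedSeq) : ∃ᶠ t in atTop, sweep γ t = y := by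
  obtain ⟨C, hC⟩ := y.2
  refine frequently_atTop.mpr fun R => ?_
  obtain ⟨k, hk⟩ := exists_nat_ge (max 1 (max C R))
  have hk0 : (0 : ℝ) < k := zero_lt_one.trans_le (le_of_max_le_left hk)
  have hkC : C ≤ k := (le_max_left _ _).trans (le_of_max_le_right hk)
  have hkR : R ≤ k := (le_max_right _ _).trans (le_of_max_le_right hk)
  let z : ℕ → unitInterval := fun n => ⟨((y : ℕ → ℝ) n / k + 1) / 2, by
    have h : |(y : ℕ → ℝ) n / k| ≤ 1 := by
      rw [abs_div, abs_of_pos hk0, div_le_one hk0]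
      exact (hC n).trans hkC
    constructor <;> linarith [abs_le.mp h]⟩
  obtain ⟨s, hs, hsz⟩ := hγ (mem_univ z)
  refine ⟨2 * k + s, by linarith [hs.1], Subtype.ext (funext fun n => ?_)⟩
  rw [sweep_two_mul_add γ k hs, hsz]
  simp only [z]
  field_simp
  ring

def boundedSeq.uncons : C(boundedSeq, ℝ × boundedSeq) where
  toFun x := ((x : ℕ → ℝ) 0, ⟨fun n => (x : ℕ → ℝ) (n + 1), x.2.imp fun _ hC n => hC (n + 1)⟩)
  continuous_toFun := by
    refine ((continuous_apply 0).comp continuous_subtype_val).prodMk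
      (Continuous.subtype_mk (continuous_pi fun n => ?_) _)
    exact (continuous_apply (n + 1)).comp continuous_subtype_val

theorem boundedSeq.uncons_surjective : Function.Surjective boundedSeq.uncons := by
  rintro ⟨r, a, C, hC⟩
  refine ⟨⟨fun n => Nat.casesOn n r (a : ℕ → ℝ), max |r| C, fun n => ?_⟩, rfl⟩
  cases n with
  | zero => exact le_max_left _ _
  | succ n => exact (hC n).trans (le_max_right _ _)

theorem exists_continuousMap_frequently_eq :
    ∃ Ψ : C(ℝ, ℝ × boundedSeq), ∀ p, ∃ᶠ t in atTop, Ψ t = p := by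
  obtain ⟨γ, hγ⟩ := exists_continuousMap_surjOn_Icc_hilbertCube
  refine ⟨boundedSeq.uncons.comp (sweep γ), fun p => ?_⟩
  obtain ⟨y, rfl⟩ := boundedSeq.uncons_surjective p
  exact (frequently_sweep_eq hγ y).mono fun t ht => by rw [ContinuousMap.comp_apply, ht]

theorem linearIndependent_exp_mul : LinearIndependent ℝ fun s r : ℝ => exp (s * r) := by
  let e : ℝ → (Multiplicative ℝ →* ℝ) := fun s =>
    { toFun r := exp (s * r.toAdd)
      map_one' := by simp
      map_mul' a b := by simp [mul_add, exp_add] }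
  have he : Function.Injective e := fun a b hab => by
    simpa [e] using congr($hab (Multiplicative.ofAdd 1))
  exact (linearIndependent_monoidHom (Multiplicative ℝ) ℝ).comp e he

section ExpTwist

variable {E X : Type*} [NormedAddCommGroup E] [NormedSpace ℝ E] [AddCommGroup X] [Module ℝ X]
  [TopologicalSpace X] [ContinuousSMul ℝ X]

noncomputable def expTwist (Ψ : C(ℝ, ℝ × X)) (ℓ : E →L[ℝ] ℝ) (s : ℝ) : C(E, X) :=
  ⟨fun x => exp (s * (Ψ (ℓ x)).1) • (Ψ (ℓ x)).2, by fun_prop⟩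

variable [IsTopologicalAddGroup X]

theorem linearCombination_expTwist_apply (Ψ : C(ℝ, ℝ × X)) (ℓ : E →L[ℝ] ℝ) (c : ℝ →₀ ℝ)
    (x : E) : Finsupp.linearCombination ℝ (expTwist Ψ ℓ) c x =
      Finsupp.linearCombination ℝ (fun s r : ℝ => exp (s * r)) c (Ψ (ℓ x)).1 • (Ψ (ℓ x)).2 := by
  simp [Finsupp.linearCombination_apply, Finsupp.sum, Finset.sum_smul, smul_smul, expTwist]

variable {Ψ : C(ℝ, ℝ × X)} (hΨ : ∀ p, ∃ᶠ t in atTop, Ψ t = p) {ℓ : E →L[ℝ] ℝ} {v : E}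
  (hv : ℓ v = 1)
include hΨ hv

theorem not_isBounded_preimage_linearCombination_expTwist {c : ℝ →₀ ℝ} (hc : c ≠ 0) (a : X) :
    ¬ Bornology.IsBounded (Finsupp.linearCombination ℝ (expTwist Ψ ℓ) c ⁻¹' {a}) := by
  set h := Finsupp.linearCombination ℝ (fun s r : ℝ => exp (s * r)) c
  obtain ⟨r, hr⟩ : ∃ r, h r ≠ 0 := by
    by_contra! H
    exact hc (linearIndependent_iff.mp linearIndependent_exp_mul c (funext H))
  have hv0 : v ≠ 0 := by rintro rfl; simp at hv
  have hnorm : Tendsto (fun t : ℝ => ‖t • v‖) atTop atTop := by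
    simp_rw [norm_smul]
    exact tendsto_norm_atTop_atTop.atTop_mul_const (norm_pos_iff.mpr hv0)
  rw [isBounded_iff_forall_norm_le]
  rintro ⟨C, hC⟩
  obtain ⟨t, hΨt, hCt⟩ :=
    ((hΨ (r, (h r)⁻¹ • a)).and_eventually (hnorm.eventually_gt_atTop C)).exists
  refine (hC (t • v) ?_).not_gt hCt
  rw [mem_preimage, mem_singleton_iff, linearCombination_expTwist_apply, map_smul, hv,
    smul_eq_mul, mul_one, hΨt, smul_inv_smul₀ hr]

theorem linearIndependent_expTwist [Nontrivial X] : LinearIndependent ℝ (expTwist Ψ ℓ) := by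
  rw [linearIndependent_iff]
  intro c hc0
  by_contra hc
  obtain ⟨a, ha⟩ := exists_ne (0 : X)
  have hempty : Finsupp.linearCombination ℝ (expTwist Ψ ℓ) c ⁻¹' {a} = ∅ := by
    rw [hc0]
    exact preimage_const_of_notMem ha.symm
  exact not_isBounded_preimage_linearCombination_expTwist hΨ hv hc a
    (hempty ▸ Bornology.isBounded_empty)

theorem not_isBounded_preimage_of_mem_span_expTwist {g : C(E, X)}
    (hg : g ∈ Submodule.span ℝ (range (expTwist Ψ ℓ))) (hg0 : g ≠ 0) (a : X) :
    ¬ Bornology.IsBounded (g ⁻¹' {a}) := by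
  rw [← Finsupp.range_linearCombination] at hg
  obtain ⟨c, rfl⟩ := hg
  exact not_isBounded_preimage_linearCombination_expTwist hΨ hv (by rintro rfl; simp at hg0) a

end ExpTwist

theorem stmt17 (m : ℕ) (hm : 1 ≤ m) :
    IsSigmaPeano boundedSeq ∧
      ∃ (ι : Type) (F : ι → C(EuclideanSpace ℝ (Fin m), boundedSeq)),
        Cardinal.mk ι = Cardinal.continuum ∧
        LinearIndependent ℝ F ∧
        ∀ g ∈ Submodule.span ℝ (Set.range F), g ≠ 0 → CSInf m boundedSeq ⇑g := by
  refine ⟨isSigmaPeano_boundedSeq, ?_⟩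
  obtain ⟨v, hv⟩ : ∃ v : EuclideanSpace ℝ (Fin m), v ≠ 0 :=
    ⟨EuclideanSpace.single ⟨0, hm⟩ 1, by simp⟩
  obtain ⟨ℓ, hℓ⟩ := SeparatingDual.exists_eq_one (R := ℝ) hv
  obtain ⟨Ψ, hΨ⟩ := exists_continuousMap_frequently_eq
  exact ⟨ℝ, expTwist Ψ ℓ, Cardinal.mk_real, linearIndependent_expTwist hΨ hℓ,
    fun g hg hg0 => ⟨g.continuous, not_isBounded_preimage_of_mem_span_expTwist hΨ hℓ hg hg0⟩⟩
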